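/- Assume 4κλ ≥ θ². Then, almost surely, for every n = 0, …, N−1 the value v_{n+1} given by the closed-form recursion is the unique real number y satisfying the implicit equation y = v_n + κ(λ − y)(t_{n+1} − t_n) + θ√(v_n)Δ_nW + (θ²/4)((Δ_nW)² − (t_{n+1} − t_n)), and moreover v_n ≥ 0 for all n = 0, 1, …, N. -/

import Mathlib

/-!
Since `√v ^ 2 = v` for `v = v_n ≥ 0`, expanding the square shows that `(1 + κΔ_n) v_{n+1}` equals
`v_n + κλΔ_n + θ√v_n Δ_nW + (θ²/4)((Δ_nW)² - Δ_n)`, i.e. the implicit equation with `y` collected on the left;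
it is affine in `y` with slope `1 + κΔ_n > 0`, so the solution is unique. Nonnegativity needs no
induction: `v_{n+1}` is a square plus `(κλ - θ²/4)Δ_n ≥ 0`, divided by `1 + κΔ_n > 0`. The
argument is pathwise, so the conclusion holds for every `ω`, not only almost surely.
-/

open MeasureTheory ProbabilityTheory
open scoped ENNReal NNReal

noncomputable section

variable {Ω : Type*} [MeasurableSpace Ω]

/-- A standard Brownian motion (indexed by all of `ℝ`; only nonnegative times matter):
it starts at `0`, has Gaussian increments with the correct variance, and has independent
increments. -/
structure IsBrownian (P : Measure Ω) (W : ℝ → Ω → ℝ) : Prop where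
  meas : ∀ s : ℝ, Measurable (W s)
  start : ∀ ω, W 0 ω = 0
  gauss : ∀ s t : ℝ, 0 ≤ s → s ≤ t →
    Measure.map (fun ω => W t ω - W s ω) P = gaussianReal 0 (Real.toNNReal (t - s))
  indep : ∀ u : ℕ → ℝ, Monotone u →
    iIndepFun (fun k ω => W (u (k + 1)) ω - W (u k) ω) P

/-- A partition `0 = t₀ < t₁ < ⋯ < t_N = T` of `[0, T]`. -/
structure IsPartition (t : ℕ → ℝ) (N : ℕ) (T : ℝ) : Prop where
  zero : t 0 = 0
  last : t N = T
  lt : ∀ k < N, t k < t (k + 1)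

/-- The mesh `Δ = max_{1 ≤ k ≤ N} (t_k - t_{k-1})` of a partition. -/
def mesh (t : ℕ → ℝ) (N : ℕ) : ℝ := ⨆ k ∈ Finset.range N, (t (k + 1) - t k)

/-- The drift-implicit Milstein scheme `v_n` for the CIR process (closed form). -/
def milstein (κ lam θ v₀ : ℝ) (t : ℕ → ℝ) (W : ℝ → Ω → ℝ) : ℕ → Ω → ℝ
  | 0 => fun _ => v₀
  | n + 1 => fun ω =>
      (1 / (1 + κ * (t (n + 1) - t n))) *
        ((Real.sqrt (milstein κ lam θ v₀ t W n ω)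
            + (θ / 2) * (W (t (n + 1)) ω - W (t n) ω)) ^ 2
          + (κ * lam - θ ^ 2 / 4) * (t (n + 1) - t n))

/-- `n(s)`: the index of the largest partition point `≤ s`. -/
def nIdx (t : ℕ → ℝ) (N : ℕ) (s : ℝ) : ℕ := Nat.findGreatest (fun n => t n ≤ s) N

/-- `η(s)`: the largest partition point `≤ s`. -/
def eta (t : ℕ → ℝ) (N : ℕ) (s : ℝ) : ℝ := t (nIdx t N s)

/-- `ṽ_s`: the interpolation of the Milstein scheme before the implicit-drift division. -/
def tildeV (κ lam θ v₀ : ℝ) (t : ℕ → ℝ) (N : ℕ) (W : ℝ → Ω → ℝ) (s : ℝ) (ω : Ω) : ℝ :=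
  milstein κ lam θ v₀ t W (nIdx t N s) ω + κ * lam * (s - eta t N s)
    + θ * Real.sqrt (milstein κ lam θ v₀ t W (nIdx t N s) ω) * (W s ω - W (eta t N s) ω)
    + (θ ^ 2 / 4) * ((W s ω - W (eta t N s) ω) ^ 2 - (s - eta t N s))

/-- `v̂_s`: the continuous-time interpolation of the Milstein scheme. -/
def hatV (κ lam θ v₀ : ℝ) (t : ℕ → ℝ) (N : ℕ) (W : ℝ → Ω → ℝ) (s : ℝ) (ω : Ω) : ℝ :=
  tildeV κ lam θ v₀ t N W s ω / (1 + κ * (s - eta t N s))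

theorem milstein_square_expansion {v : ℝ} (hv : 0 ≤ v) (θ x c Δ : ℝ) :
    (Real.sqrt v + θ / 2 * x) ^ 2 + (c - θ ^ 2 / 4) * Δ
      = v + c * Δ + θ * Real.sqrt v * x + θ ^ 2 / 4 * (x ^ 2 - Δ) := by
  linear_combination Real.sq_sqrt hv

theorem eq_of_implicit_step {κ lam Δ a b c y z : ℝ} (hΔ : 1 + κ * Δ ≠ 0)
    (hy : y = a + κ * (lam - y) * Δ + b + c) (hz : z = a + κ * (lam - z) * Δ + b + c) :
    y = z :=
  mul_left_cancel₀ hΔ (by linear_combination hy - hz)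

section Milstein

variable {Ω : Type*} {κ lam θ v₀ : ℝ} {t : ℕ → ℝ} {W : ℝ → Ω → ℝ}

theorem milstein_succ_nonneg (hκ : 0 ≤ κ) (hF : θ ^ 2 ≤ 4 * κ * lam) {n : ℕ}
    (ht : t n ≤ t (n + 1)) (ω : Ω) : 0 ≤ milstein κ lam θ v₀ t W (n + 1) ω := by
  have hΔ : 0 ≤ t (n + 1) - t n := sub_nonneg.mpr ht
  have hdrift : 0 ≤ κ * lam - θ ^ 2 / 4 := by linarith
  simp only [milstein]
  positivity

theorem milstein_nonneg (hκ : 0 ≤ κ) (hv₀ : 0 ≤ v₀) (hF : θ ^ 2 ≤ 4 * κ * lam) {N : ℕ}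
    (ht : ∀ k < N, t k ≤ t (k + 1)) (ω : Ω) :
    ∀ n ≤ N, 0 ≤ milstein κ lam θ v₀ t W n ω
  | 0, _ => hv₀
  | n + 1, hn => milstein_succ_nonneg hκ hF (ht n hn) ω

theorem milstein_succ_eq_implicit {n : ℕ} {ω : Ω} (hΔ : 1 + κ * (t (n + 1) - t n) ≠ 0)
    (hv : 0 ≤ milstein κ lam θ v₀ t W n ω) :
    milstein κ lam θ v₀ t W (n + 1) ω
      = milstein κ lam θ v₀ t W n ω
        + κ * (lam - milstein κ lam θ v₀ t W (n + 1) ω) * (t (n + 1) - t n)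
        + θ * Real.sqrt (milstein κ lam θ v₀ t W n ω) * (W (t (n + 1)) ω - W (t n) ω)
        + (θ ^ 2 / 4) * ((W (t (n + 1)) ω - W (t n) ω) ^ 2 - (t (n + 1) - t n)) := by
  have hexp := milstein_square_expansion hv θ (W (t (n + 1)) ω - W (t n) ω) (κ * lam)
    (t (n + 1) - t n)
  have hmul : milstein κ lam θ v₀ t W (n + 1) ω * (1 + κ * (t (n + 1) - t n))
      = (Real.sqrt (milstein κ lam θ v₀ t W n ω)
          + θ / 2 * (W (t (n + 1)) ω - W (t n) ω)) ^ 2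
        + (κ * lam - θ ^ 2 / 4) * (t (n + 1) - t n) := by
    simp only [milstein, one_div_mul_eq_div]
    exact div_mul_cancel₀ _ hΔ
  linear_combination hmul + hexp

end Milstein

theorem statement12_general
    {Ω : Type*} [MeasurableSpace Ω] (P : Measure Ω)
    (W : ℝ → Ω → ℝ)
    (κ lam θ v₀ T : ℝ)
    (hκ : 0 < κ) (hv₀ : 0 < v₀)
    (hF : θ ^ 2 ≤ 4 * κ * lam) :
    ∀ (N : ℕ) (t : ℕ → ℝ), IsPartition t N T →
      ∀ᵐ ω ∂P,
        (∀ n < N,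
          (milstein κ lam θ v₀ t W (n + 1) ω
              = milstein κ lam θ v₀ t W n ω
                + κ * (lam - milstein κ lam θ v₀ t W (n + 1) ω) * (t (n + 1) - t n)
                + θ * Real.sqrt (milstein κ lam θ v₀ t W n ω) * (W (t (n + 1)) ω - W (t n) ω)
                + (θ ^ 2 / 4) * ((W (t (n + 1)) ω - W (t n) ω) ^ 2 - (t (n + 1) - t n)))
          ∧ ∀ y : ℝ,
              y = milstein κ lam θ v₀ t W n ω + κ * (lam - y) * (t (n + 1) - t n)
                + θ * Real.sqrt (milstein κ lam θ v₀ t W n ω) * (W (t (n + 1)) ω - W (t n) ω)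
                + (θ ^ 2 / 4) * ((W (t (n + 1)) ω - W (t n) ω) ^ 2 - (t (n + 1) - t n))
              → y = milstein κ lam θ v₀ t W (n + 1) ω)
        ∧ ∀ n ≤ N, 0 ≤ milstein κ lam θ v₀ t W n ω := by
  intro N t ht
  have hmono : ∀ k < N, t k ≤ t (k + 1) := fun k hk => (ht.lt k hk).le
  refine Filter.Eventually.of_forall fun ω => ?_
  have hnonneg := milstein_nonneg (W := W) hκ.le hv₀.le hF hmono ω
  refine ⟨fun n hn => ?_, hnonneg⟩
  have hΔ : 1 + κ * (t (n + 1) - t n) ≠ 0 := by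
    have := sub_nonneg.mpr (hmono n hn)
    positivity
  have hsolves := milstein_succ_eq_implicit hΔ (hnonneg n hn.le)
  exact ⟨hsolves, fun y hy => eq_of_implicit_step hΔ hy hsolves⟩

/-- if `4κλ ≥ θ²` then, almost surely, the closed-form value `v_{n+1}` of the
drift-implicit Milstein scheme is the unique solution `y` of the implicit equation
`y = v_n + κ(λ - y)(t_{n+1} - t_n) + θ√(v_n)Δ_nW + (θ²/4)((Δ_nW)² - (t_{n+1} - t_n))`,
and all `v_n`, `n = 0, …, N`, are nonnegative. -/
theorem statement12
    {Ω : Type*} [MeasurableSpace Ω] (P : Measure Ω) [IsProbabilityMeasure P]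
    (W : ℝ → Ω → ℝ) (hW : IsBrownian P W)
    (κ lam θ v₀ T : ℝ)
    (hκ : 0 < κ) (hlam : 0 < lam) (hθ : 0 < θ) (hv₀ : 0 < v₀) (hT : 0 < T)
    (hF : θ ^ 2 ≤ 4 * κ * lam) :
    ∀ (N : ℕ) (t : ℕ → ℝ), IsPartition t N T →
      ∀ᵐ ω ∂P,
        (∀ n < N,
          (milstein κ lam θ v₀ t W (n + 1) ω
              = milstein κ lam θ v₀ t W n ω
                + κ * (lam - milstein κ lam θ v₀ t W (n + 1) ω) * (t (n + 1) - t n)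
                + θ * Real.sqrt (milstein κ lam θ v₀ t W n ω) * (W (t (n + 1)) ω - W (t n) ω)
                + (θ ^ 2 / 4) * ((W (t (n + 1)) ω - W (t n) ω) ^ 2 - (t (n + 1) - t n)))
          ∧ ∀ y : ℝ,
              y = milstein κ lam θ v₀ t W n ω + κ * (lam - y) * (t (n + 1) - t n)
                + θ * Real.sqrt (milstein κ lam θ v₀ t W n ω) * (W (t (n + 1)) ω - W (t n) ω)
                + (θ ^ 2 / 4) * ((W (t (n + 1)) ω - W (t n) ω) ^ 2 - (t (n + 1) - t n))
              → y = milstein κ lam θ v₀ t W (n + 1) ω)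
        ∧ ∀ n ≤ N, 0 ≤ milstein κ lam θ v₀ t W n ω :=
  statement12_general P W κ lam θ v₀ T hκ hv₀ hF

end
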